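/- arXiv:2510.17337 — 2 statements merged into one kernel-verified Lean document; each statement's English description precedes it below -/
import Mathlib

section
/- Let D be a (4n−1, 2n−1, n−1) difference set in a finite abelian group G (Paley type). Then D×D ∪ (D̄×D̄ minus its diagonal) ⊆ G², where D̄ = G∖D, is a difference set of propriety 3 with parameters (4n−1, (4n−1)(2n−1), (4n−1)(n−1)). -/
/-!
Write `E = D × D ∪ (Dᶜ × Dᶜ ∖ Δ)`. For `g ≠ 1`, the four membership patterns of `(x, x g)` in a
`(v, k, λ)` difference set occur `λ, k - λ, k - λ, v - 2k + λ` times, that is `n - 1, n, n, n`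
for Paley parameters. In condition (1), for fixed `x` the admissible `y` are those with the same
pattern as `x`, minus `y = x` unless both `x, x g ∈ D`; this gives `n - 1` for every `x`.
In condition (2), for fixed `u ≠ u'` the number of `y` with `(u, y), (u', y) ∈ E` is
`|D| = 2n - 1` if `u, u' ∈ D`, `|Dᶜ| - 2 = 2n - 2` if `u, u' ∉ D`, and `0` otherwise, so the
total is `(n - 1)(2n - 1) + n(2n - 2) = (4n - 1)(n - 1)`. Condition (3) is (2) transported by the
symmetry of `E`.
-/

open Finset

/-- A (v,k,lam) difference set in a group G of order v. -/
def IsDiffSet (G : Type*) [CommGroup G] [Fintype G] [DecidableEq G]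
    (v k lam : ℕ) (D : Finset G) : Prop :=
  Fintype.card G = v ∧ D.card = k ∧
  ∀ g : G, g ≠ 1 → ((D ×ˢ D).filter fun p => p.1 * p.2⁻¹ = g).card = lam

/-- A (v,k,lam) difference set of propriety 3. -/
def IsPropDS3 (G : Type*) [CommGroup G] [Fintype G] [DecidableEq G]
    (v k lam : ℕ) (D : Finset (G × G)) : Prop :=
  Fintype.card G = v ∧ D.card = k ∧
  ∀ g : G, g ≠ 1 →
    (((D ×ˢ D).filter fun p => p.1.1⁻¹ * p.2.1 = g ∧ p.1.2⁻¹ * p.2.2 = g).card = lam ∧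
     ((D ×ˢ D).filter fun p => p.1.1 * p.2.1⁻¹ = g ∧ p.1.2 = p.2.2).card = lam ∧
     ((D ×ˢ D).filter fun p => p.1.1 = p.2.1 ∧ p.1.2 * p.2.2⁻¹ = g).card = lam)

section Counting

variable {α β : Type*}

lemma card_filter_product_of_iff_eq_apply [DecidableEq β] (s : Finset α) (t : Finset β)
    (f : α → β) (P : α × β → Prop) [DecidablePred P] (hP : ∀ p, P p ↔ p.2 = f p.1) :
    #{p ∈ s ×ˢ t | P p} = #{a ∈ s | f a ∈ t} := by
  refine card_nbij' Prod.fst (fun a => (a, f a)) ?_ ?_ ?_ ?_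
  · intro p hp
    simp only [coe_filter, mem_product, Set.mem_ofPred_eq, hP] at hp ⊢
    exact ⟨hp.1.1, hp.2 ▸ hp.1.2⟩
  · intro a ha
    simp_all
  · intro p hp
    simp_all [Prod.ext_iff]
  · intro a _
    rfl

lemma card_eq_sum_card_slice [Fintype α] [Fintype β] [DecidableEq α] [DecidableEq β]
    (E : Finset (α × β)) : #E = ∑ a, #{b | (a, b) ∈ E} := by
  calc #E = #{p : α × β | p ∈ E} := by rw [filter_univ_mem]
    _ = ∑ a, #{b | (a, b) ∈ E} := by simp_rw [card_filter, ← univ_product_univ, sum_product]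

lemma card_filter_and_ne [Fintype α] [DecidableEq α] {p : α → Prop} [DecidablePred p] {a : α}
    (ha : p a) : #{x | p x ∧ x ≠ a} = #{x | p x} - 1 := by
  rw [← filter_filter, filter_ne', card_erase_of_mem (by simpa using ha)]

end Counting

section PairCounts

variable {G : Type*} [Group G] [DecidableEq G] (E : Finset (G × G)) (g : G)

lemma card_filter_eq_mul_inv_eq_of_swap (hE : ∀ a b, (a, b) ∈ E → (b, a) ∈ E) :
    #{p ∈ E ×ˢ E | p.1.1 = p.2.1 ∧ p.1.2 * p.2.2⁻¹ = g}
      = #{p ∈ E ×ˢ E | p.1.1 * p.2.1⁻¹ = g ∧ p.1.2 = p.2.2} := by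
  refine card_nbij' (fun p => (p.1.swap, p.2.swap)) (fun p => (p.1.swap, p.2.swap))
    ?_ ?_ (fun _ _ => rfl) (fun _ _ => rfl) <;>
  · rintro ⟨⟨a, b⟩, ⟨c, d⟩⟩ hp
    simp only [coe_filter, mem_product, Set.mem_ofPred_eq, Prod.swap_prod_mk] at hp ⊢
    exact ⟨⟨hE _ _ hp.1.1, hE _ _ hp.1.2⟩, hp.2.2, hp.2.1⟩

variable [Fintype G]

lemma card_filter_inv_mul_eq_inv_mul_eq :
    #{p ∈ E ×ˢ E | p.1.1⁻¹ * p.2.1 = g ∧ p.1.2⁻¹ * p.2.2 = g}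
      = ∑ x, #{y | (x, y) ∈ E ∧ (x * g, y * g) ∈ E} := by
  rw [card_filter_product_of_iff_eq_apply E E (fun q => (q.1 * g, q.2 * g)) _
    fun p => by simp only [inv_mul_eq_iff_eq_mul, Prod.ext_iff], card_eq_sum_card_slice]
  simp only [mem_filter]

lemma card_filter_mul_inv_eq_eq :
    #{p ∈ E ×ˢ E | p.1.1 * p.2.1⁻¹ = g ∧ p.1.2 = p.2.2}
      = ∑ x, #{y | (x, y) ∈ E ∧ (g⁻¹ * x, y) ∈ E} := by
  rw [card_filter_product_of_iff_eq_apply E E (fun q => (g⁻¹ * q.1, q.2)) _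
    fun p => by
      rw [Prod.ext_iff, mul_inv_eq_iff_eq_mul, eq_inv_mul_iff_mul_eq, eq_comm (a := p.2.2)]
      exact and_congr_left' eq_comm,
    card_eq_sum_card_slice]
  simp only [mem_filter]

end PairCounts

section PaleyProduct

variable {α : Type*} [Fintype α] [DecidableEq α] (D : Finset α)

def paleyProduct : Finset (α × α) :=
  (D ×ˢ D) ∪ ((Dᶜ ×ˢ Dᶜ).filter fun p => p.1 ≠ p.2)

variable {D}

@[simp]
lemma mem_paleyProduct {a b : α} :
    (a, b) ∈ paleyProduct D ↔ a ∈ D ∧ b ∈ D ∨ a ∉ D ∧ b ∉ D ∧ a ≠ b := by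
  simp [paleyProduct, and_assoc]

lemma swap_mem_paleyProduct {a b : α} (h : (a, b) ∈ paleyProduct D) :
    (b, a) ∈ paleyProduct D := by
  rw [mem_paleyProduct] at h ⊢
  tauto

variable (D) in
lemma card_paleyProduct : #(paleyProduct D) = #D * #D + (#Dᶜ * #Dᶜ - #Dᶜ) := by
  have hdisj : Disjoint (D ×ˢ D) ((Dᶜ ×ˢ Dᶜ).filter fun p => p.1 ≠ p.2) :=
    disjoint_left.2 fun p hp hp' => (mem_compl.1 (mem_product.1 (mem_filter.1 hp').1).1)
      (mem_product.1 hp).1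
  have hoff : ((Dᶜ ×ˢ Dᶜ).filter fun p => p.1 ≠ p.2) = Dᶜ.offDiag := by
    ext p
    simp [mem_offDiag, and_assoc]
  rw [paleyProduct, card_union_of_disjoint hdisj, card_product, hoff, offDiag_card]

lemma card_filter_mem_paleyProduct_and_mem {u v : α} (huv : u ≠ v) :
    #{y | (u, y) ∈ paleyProduct D ∧ (v, y) ∈ paleyProduct D}
      = if u ∈ D ∧ v ∈ D then #D else if u ∉ D ∧ v ∉ D then #Dᶜ - 2 else 0 := by
  split_ifs with hD hDc
  · congr 1
    ext y
    simp [hD.1, hD.2]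
  · have : ({y | (u, y) ∈ paleyProduct D ∧ (v, y) ∈ paleyProduct D} : Finset α)
        = (Dᶜ.erase u).erase v := by
      ext y
      simp only [mem_filter, mem_univ, true_and, mem_paleyProduct, mem_erase, mem_compl]
      grind
    rw [this, card_erase_of_mem (by simp [huv.symm, hDc.2]),
      card_erase_of_mem (mem_compl.2 hDc.1), Nat.sub_sub]
  · rw [card_eq_zero, filter_eq_empty_iff]
    intro y _
    simp only [mem_paleyProduct]
    tauto

end PaleyProduct

namespace IsDiffSet

variable {G : Type*} [CommGroup G] [Fintype G] [DecidableEq G] {v k lam : ℕ} {D : Finset G}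
  {g : G}

lemma card_mem_mul_mem (hD : IsDiffSet G v k lam D) (hg : g ≠ 1) :
    #{x | x ∈ D ∧ x * g ∈ D} = lam := by
  rw [← hD.2.2 g hg]
  refine card_nbij' (fun x => (x * g, x)) Prod.snd ?_ ?_ (fun _ _ => rfl) ?_
  · intro x hx
    simp_all
  · rintro ⟨a, b⟩ hp
    simp only [coe_filter, mem_product, Set.mem_ofPred_eq] at hp
    obtain ⟨⟨ha, hb⟩, rfl⟩ := hp
    simp [ha, hb]
  · rintro ⟨a, b⟩ hp
    simp only [coe_filter, mem_product, Set.mem_ofPred_eq] at hp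
    obtain ⟨-, rfl⟩ := hp
    simp

lemma card_mem_mul_notMem (hD : IsDiffSet G v k lam D) (hg : g ≠ 1) :
    #{x | x ∈ D ∧ x * g ∉ D} = k - lam := by
  have := card_filter_add_card_filter_not (s := {x | x ∈ D}) (fun x => x * g ∈ D)
  rw [filter_filter, filter_filter, hD.card_mem_mul_mem hg, filter_univ_mem, hD.2.1] at this
  omega

lemma card_mul_mem (hD : IsDiffSet G v k lam D) (g : G) : #{x | x * g ∈ D} = k := by
  rw [← hD.2.1]
  exact card_nbij' (· * g) (· * g⁻¹) (fun x hx => by simpa using hx)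
    (fun y hy => by simpa using hy) (fun x _ => mul_inv_cancel_right x g)
    (fun y _ => inv_mul_cancel_right y g)

lemma card_notMem_mul_mem (hD : IsDiffSet G v k lam D) (hg : g ≠ 1) :
    #{x | x ∉ D ∧ x * g ∈ D} = k - lam := by
  have := card_filter_add_card_filter_not (s := {x | x * g ∈ D}) (fun x => x ∈ D)
  rw [filter_filter, filter_filter, hD.card_mul_mem] at this
  simp only [and_comm (a := _ * g ∈ D)] at this
  rw [hD.card_mem_mul_mem hg] at this
  omega

lemma card_notMem_mul_notMem (hD : IsDiffSet G v k lam D) (hg : g ≠ 1) :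
    #{x | x ∉ D ∧ x * g ∉ D} = v + lam - 2 * k := by
  have hcompl := card_filter_add_card_filter_not (s := univ) (fun x : G => x ∈ D)
  have hsplit := card_filter_add_card_filter_not (s := {x | x ∉ D}) (fun x => x * g ∈ D)
  rw [filter_filter, filter_filter, hD.card_notMem_mul_mem hg] at hsplit
  rw [filter_univ_mem, hD.2.1, card_univ, hD.1] at hcompl
  have hsplitD := card_filter_add_card_filter_not (s := {x | x ∈ D}) (fun x => x * g ∈ D)
  rw [filter_filter, filter_filter, hD.card_mem_mul_mem hg, filter_univ_mem, hD.2.1,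
    hD.card_mem_mul_notMem hg] at hsplitD
  omega

variable {n : ℕ}

lemma pos_of_paley (hD : IsDiffSet G (4 * n - 1) (2 * n - 1) (n - 1) D) : 0 < n := by
  have := hD.1 ▸ Fintype.card_pos (α := G)
  omega

lemma card_compl_of_paley (hD : IsDiffSet G (4 * n - 1) (2 * n - 1) (n - 1) D) :
    #Dᶜ = 2 * n := by
  rw [card_compl, hD.1, hD.2.1]
  omega

lemma card_paleyProduct_of_paley (hD : IsDiffSet G (4 * n - 1) (2 * n - 1) (n - 1) D) :
    #(paleyProduct D) = (4 * n - 1) * (2 * n - 1) := by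
  obtain ⟨m, rfl⟩ := Nat.exists_eq_add_one_of_ne_zero hD.pos_of_paley.ne'
  rw [card_paleyProduct, hD.2.1, hD.card_compl_of_paley, ← Nat.mul_sub_one,
    show 2 * (m + 1) - 1 = 2 * m + 1 by omega, show 4 * (m + 1) - 1 = 4 * m + 3 by omega]
  ring

lemma card_filter_mem_paleyProduct_mul_right
    (hD : IsDiffSet G (4 * n - 1) (2 * n - 1) (n - 1) D) (hg : g ≠ 1) (x : G) :
    #{y | (x, y) ∈ paleyProduct D ∧ (x * g, y * g) ∈ paleyProduct D} = n - 1 := by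
  have hn := hD.pos_of_paley
  by_cases hx : x ∈ D <;> by_cases hxg : x * g ∈ D
  · rw [← hD.card_mem_mul_mem hg]
    exact congrArg card (filter_congr fun y _ => by simp [hx, hxg])
  · rw [filter_congr fun y _ =>
        show _ ↔ (y ∈ D ∧ y * g ∉ D) ∧ y ≠ x by simp [hx, hxg]; tauto,
      card_filter_and_ne (p := fun y => y ∈ D ∧ y * g ∉ D) ⟨hx, hxg⟩,
      hD.card_mem_mul_notMem hg]
    omega
  · rw [filter_congr fun y _ =>
        show _ ↔ (y ∉ D ∧ y * g ∈ D) ∧ y ≠ x by simp [hx, hxg]; tauto,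
      card_filter_and_ne (p := fun y => y ∉ D ∧ y * g ∈ D) ⟨hx, hxg⟩,
      hD.card_notMem_mul_mem hg]
    omega
  · rw [filter_congr fun y _ =>
        show _ ↔ (y ∉ D ∧ y * g ∉ D) ∧ y ≠ x by simp [hx, hxg]; tauto,
      card_filter_and_ne (p := fun y => y ∉ D ∧ y * g ∉ D) ⟨hx, hxg⟩,
      hD.card_notMem_mul_notMem hg]
    omega

lemma sum_card_filter_mem_paleyProduct_mul_left
    (hD : IsDiffSet G (4 * n - 1) (2 * n - 1) (n - 1) D) {h : G} (hh : h ≠ 1) :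
    ∑ u, #{y | (u, y) ∈ paleyProduct D ∧ (h * u, y) ∈ paleyProduct D}
      = (4 * n - 1) * (n - 1) := by
  have hne (u : G) : u ≠ h * u := fun hu => hh (by simpa using hu.symm)
  simp_rw [card_filter_mem_paleyProduct_and_mem (hne _), sum_ite, sum_const_zero, sum_const,
    filter_filter, smul_eq_mul, add_zero, mul_comm h]
  rw [filter_congr fun u _ =>
      show ¬(u ∈ D ∧ u * h ∈ D) ∧ u ∉ D ∧ u * h ∉ D ↔ u ∉ D ∧ u * h ∉ D by tauto,
    hD.card_mem_mul_mem hh, hD.card_notMem_mul_notMem hh, hD.2.1,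
    hD.card_compl_of_paley]
  obtain ⟨m, rfl⟩ := Nat.exists_eq_add_one_of_ne_zero hD.pos_of_paley.ne'
  rw [show 4 * (m + 1) - 1 = 4 * m + 3 by omega, show 2 * (m + 1) - 1 = 2 * m + 1 by omega,
    show 2 * (m + 1) - 2 = 2 * m by omega, Nat.add_sub_cancel,
    show 4 * m + 3 + m - 2 * (2 * m + 1) = m + 1 by omega]
  ring

end IsDiffSet

theorem stmt13_general {G : Type*} [CommGroup G] [Fintype G] [DecidableEq G]
    (n : ℕ) (D : Finset G)
    (hD : IsDiffSet G (4 * n - 1) (2 * n - 1) (n - 1) D) :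
    IsPropDS3 G (4 * n - 1) ((4 * n - 1) * (2 * n - 1)) ((4 * n - 1) * (n - 1))
      ((D ×ˢ D) ∪ ((Dᶜ ×ˢ Dᶜ).filter fun p => p.1 ≠ p.2)) := by
  change IsPropDS3 G _ _ _ (paleyProduct D)
  refine ⟨hD.1, hD.card_paleyProduct_of_paley, fun g hg => ?_⟩
  have hfst :
      #{p ∈ paleyProduct D ×ˢ paleyProduct D | p.1.1 * p.2.1⁻¹ = g ∧ p.1.2 = p.2.2}
        = (4 * n - 1) * (n - 1) := by
    rw [card_filter_mul_inv_eq_eq]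
    exact hD.sum_card_filter_mem_paleyProduct_mul_left (inv_ne_one.2 hg)
  refine ⟨?_, hfst, ?_⟩
  · rw [card_filter_inv_mul_eq_inv_mul_eq, sum_congr rfl fun x _ =>
      hD.card_filter_mem_paleyProduct_mul_right hg x, sum_const, card_univ, hD.1, smul_eq_mul]
  · rw [card_filter_eq_mul_inv_eq_of_swap _ _ fun _ _ => swap_mem_paleyProduct, hfst]

theorem stmt13 {G : Type*} [CommGroup G] [Fintype G] [DecidableEq G]
    (n : ℕ) (hn : 0 < n) (D : Finset G)
    (hD : IsDiffSet G (4 * n - 1) (2 * n - 1) (n - 1) D) :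
    IsPropDS3 G (4 * n - 1) ((4 * n - 1) * (2 * n - 1)) ((4 * n - 1) * (n - 1))
      ((D ×ˢ D) ∪ ((Dᶜ ×ˢ Dᶜ).filter fun p => p.1 ≠ p.2)) :=
  stmt13_general n D hD
end

section
/- Let D be a (4n², 2n²−n, n²−n) Hadamard difference set in a finite abelian group G, and D̄ = G∖D. Then D×D ∪ D̄×D̄ is a difference set of propriety 3 with parameters (4n², 2n²(4n²+1), 2n²(2n²+1)); moreover both (D×D minus diagonal) ∪ (D̄×D̄ minus diagonal) and (D×D̄) ∪ (D̄×D) are difference sets of propriety 3 with parameters (4n², 2n²(4n²−1), 2n²(2n²−1)). -/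
open Finset

/-!
Write `shiftCount S T t` for the number of `x ∈ S` with `x * t ∈ T`. The three conditions of
propriety 3 at `g` say that `shiftCount E E t = Λ` for `t = (g, g), (g⁻¹, 1), (1, g⁻¹)`, so it
suffices to show that each of the three sets is an ordinary difference set in `G × G`.

For `E = D × D ∪ D̄ × D̄` and `t = (a, b)`, `shiftCount E E t` is a sum of products of entries of
the `2 × 2` tables `shiftCount X Y a` and `shiftCount X Y b` (`X, Y ∈ {D, D̄}`), and each table is
determined by its entry `shiftCount D D ·` through its row and column sums `k` and `v - k`. If
`a ≠ 1`, that entry is `λ` for `a`, and the coefficient of the entry for `b` is `v - 4(k - λ)`,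
which vanishes for Hadamard parameters; so the count is the same for all `t ≠ 1`. The same happens
for `D × D̄ ∪ D̄ × D`. Removing the diagonal `Δ` from `E` is an inclusion–exclusion whose
correction `shiftCount Δ E t + shiftCount Δ E t⁻¹ - shiftCount Δ Δ t` equals `v` for every `t ≠ 1`.
-/

section SameSide

variable {α : Type*} [Fintype α] [DecidableEq α]

def sameSide (D : Finset α) : Finset (α × α) := D ×ˢ D ∪ Dᶜ ×ˢ Dᶜ

def oppSide (D : Finset α) : Finset (α × α) := D ×ˢ Dᶜ ∪ Dᶜ ×ˢ D

lemma diag_subset_sameSide (D : Finset α) : (univ : Finset α).diag ⊆ sameSide D := by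
  intro p hp
  simp only [mem_diag, mem_univ, true_and] at hp
  simp [sameSide, hp, em]

lemma sameSide_sdiff_diag (D : Finset α) :
    sameSide D \ (univ : Finset α).diag
      = {p ∈ D ×ˢ D | p.1 ≠ p.2} ∪ {p ∈ Dᶜ ×ˢ Dᶜ | p.1 ≠ p.2} := by
  ext p
  simp only [sameSide, mem_sdiff, mem_union, mem_product, mem_diag, mem_filter, mem_univ, true_and]
  tauto

lemma card_sameSide (D : Finset α) :
    #(sameSide D) = #D * #D + (Fintype.card α - #D) * (Fintype.card α - #D) := by
  rw [sameSide, card_union_of_disjoint (disjoint_product.mpr (.inl disjoint_compl_right)),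
    card_product, card_product, card_compl]

lemma card_oppSide (D : Finset α) :
    #(oppSide D) = 2 * (#D * (Fintype.card α - #D)) := by
  rw [oppSide, card_union_of_disjoint (disjoint_product.mpr (.inl disjoint_compl_right)),
    card_product, card_product, card_compl]
  ring

end SameSide

section ShiftCount

variable {H K : Type*} [Group H] [DecidableEq H] [Group K] [DecidableEq K]

def shiftCount (S T : Finset H) (t : H) : ℕ := #{x ∈ S | x * t ∈ T}

lemma card_filter_snd_eq_mul (S T : Finset H) (t : H) :
    #{p ∈ S ×ˢ T | p.2 = p.1 * t} = shiftCount S T t := by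
  refine card_nbij' Prod.fst (fun x => (x, x * t)) ?_ ?_ ?_ ?_
  · rintro ⟨x, y⟩ hp
    simp only [coe_filter, mem_product, Set.mem_ofPred_eq] at hp
    obtain ⟨⟨hx, hy⟩, rfl⟩ := hp
    simpa using ⟨hx, hy⟩
  · intro x hx
    simp_all
  · rintro ⟨x, y⟩ hp
    simp_all
  · intro x _
    rfl

lemma shiftCount_union_left {S₁ S₂ : Finset H} (h : Disjoint S₁ S₂) (T : Finset H) (t : H) :
    shiftCount (S₁ ∪ S₂) T t = shiftCount S₁ T t + shiftCount S₂ T t := by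
  rw [shiftCount, filter_union, card_union_of_disjoint (disjoint_filter_filter h)]
  rfl

lemma shiftCount_union_right (S : Finset H) {T₁ T₂ : Finset H} (h : Disjoint T₁ T₂) (t : H) :
    shiftCount S (T₁ ∪ T₂) t = shiftCount S T₁ t + shiftCount S T₂ t := by
  simp only [shiftCount, mem_union]
  rw [filter_or, card_union_of_disjoint]
  exact disjoint_filter.mpr fun _ _ h₁ h₂ => disjoint_left.mp h h₁ h₂

lemma shiftCount_union_union {A B : Finset H} (h : Disjoint A B) (t : H) :
    shiftCount (A ∪ B) (A ∪ B) t
      = shiftCount A A t + shiftCount A B t + shiftCount B A t + shiftCount B B t := by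
  rw [shiftCount_union_left h, shiftCount_union_right _ h, shiftCount_union_right _ h]
  ring

lemma shiftCount_sdiff_sdiff {S T : Finset H} (hTS : T ⊆ S) (t : H) :
    shiftCount (S \ T) (S \ T) t + shiftCount T S t + shiftCount S T t
      = shiftCount S S t + shiftCount T T t := by
  have hd : Disjoint (S \ T) T := sdiff_disjoint
  have hS := shiftCount_union_union hd t
  have hTS' := shiftCount_union_right T hd t
  have hST := shiftCount_union_left hd T t
  rw [sdiff_union_of_subset hTS] at hS hTS' hST
  omega

lemma shiftCount_product (S₁ T₁ : Finset H) (S₂ T₂ : Finset K) (a : H) (b : K) :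
    shiftCount (S₁ ×ˢ S₂) (T₁ ×ˢ T₂) (a, b) = shiftCount S₁ T₁ a * shiftCount S₂ T₂ b := by
  simp only [shiftCount, ← card_product, mem_product, Prod.fst_mul, Prod.snd_mul]
  congr 1
  ext
  simp only [mem_filter, mem_product]
  tauto

lemma shiftCount_one (S T : Finset H) : shiftCount S T 1 = #(S ∩ T) := by
  simp [shiftCount, filter_mem_eq_inter]

lemma shiftCount_symm (S T : Finset H) (t : H) : shiftCount S T t = shiftCount T S t⁻¹ := by
  refine card_nbij' (· * t) (· * t⁻¹) ?_ ?_ ?_ ?_ <;> intro x hx <;> simp_all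

variable [Fintype H]

lemma shiftCount_univ_left (T : Finset H) (t : H) : shiftCount univ T t = #T := by
  refine card_nbij' (· * t) (· * t⁻¹) ?_ ?_ ?_ ?_ <;> intro x hx <;> simp_all

lemma shiftCount_add_shiftCount_compl_right (S T : Finset H) (t : H) :
    shiftCount S T t + shiftCount S Tᶜ t = #S := by
  simp only [shiftCount, mem_compl]
  exact card_filter_add_card_filter_not _

lemma shiftCount_add_shiftCount_compl_left (S T : Finset H) (t : H) :
    shiftCount S T t + shiftCount Sᶜ T t = #T := by
  rw [← shiftCount_union_left disjoint_compl_right, union_compl, shiftCount_univ_left]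

lemma shiftCount_diag_product (S T : Finset H) (a b : H) :
    shiftCount (univ : Finset H).diag (S ×ˢ T) (a, b) = shiftCount S T (a⁻¹ * b) := by
  refine card_nbij' (fun p => p.1 * a) (fun y => (y * a⁻¹, y * a⁻¹)) ?_ ?_ ?_ ?_
  · rintro ⟨x, y⟩ hp
    simp only [coe_filter, mem_diag, mem_product, Set.mem_ofPred_eq] at hp
    obtain ⟨⟨-, rfl⟩, hxa, hxb⟩ := hp
    simpa [mul_assoc] using ⟨hxa, hxb⟩
  · intro y hy
    simp_all [mul_assoc]
  · rintro ⟨x, y⟩ hp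
    simp only [coe_filter, mem_diag, mem_product, Set.mem_ofPred_eq] at hp
    obtain ⟨⟨-, rfl⟩, -⟩ := hp
    simp
  · intro y _
    simp

lemma shiftCount_diag_diag (a b : H) :
    shiftCount (univ : Finset H).diag (univ : Finset H).diag (a, b)
      = if a = b then Fintype.card H else 0 := by
  rw [shiftCount]
  split_ifs with hab
  · subst hab
    rw [filter_true_of_mem, diag_card, card_univ]
    rintro ⟨x, y⟩ hp
    simp_all
  · rw [card_eq_zero, filter_eq_empty_iff]
    rintro ⟨x, y⟩ hp
    simp_all

lemma shiftCount_compl_cast (D : Finset H) (h : H) :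
    (shiftCount D Dᶜ h : ℤ) = #D - shiftCount D D h ∧
    (shiftCount Dᶜ D h : ℤ) = #D - shiftCount D D h ∧
    (shiftCount Dᶜ Dᶜ h : ℤ) = Fintype.card H - 2 * #D + shiftCount D D h := by
  have hr := shiftCount_add_shiftCount_compl_right D D h
  have hl := shiftCount_add_shiftCount_compl_left D D h
  have hc := shiftCount_add_shiftCount_compl_left D Dᶜ h
  have hcard := card_compl D
  have hle := card_le_univ D
  refine ⟨?_, ?_, ?_⟩ <;> omega

lemma shiftCount_sameSide (D : Finset H) (a b : H) :
    shiftCount (sameSide D) (sameSide D) (a, b)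
      = shiftCount D D a * shiftCount D D b + shiftCount D Dᶜ a * shiftCount D Dᶜ b
        + shiftCount Dᶜ D a * shiftCount Dᶜ D b + shiftCount Dᶜ Dᶜ a * shiftCount Dᶜ Dᶜ b := by
  rw [sameSide, shiftCount_union_union (disjoint_product.mpr (.inl disjoint_compl_right)),
    shiftCount_product, shiftCount_product, shiftCount_product, shiftCount_product]

lemma shiftCount_oppSide (D : Finset H) (a b : H) :
    shiftCount (oppSide D) (oppSide D) (a, b)
      = shiftCount D D a * shiftCount Dᶜ Dᶜ b + shiftCount D Dᶜ a * shiftCount Dᶜ D b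
        + shiftCount Dᶜ D a * shiftCount D Dᶜ b + shiftCount Dᶜ Dᶜ a * shiftCount D D b := by
  rw [oppSide, shiftCount_union_union (disjoint_product.mpr (.inl disjoint_compl_right)),
    shiftCount_product, shiftCount_product, shiftCount_product, shiftCount_product]

lemma shiftCount_diag_sameSide (D : Finset H) (a b : H) :
    shiftCount (univ : Finset H).diag (sameSide D) (a, b)
      = shiftCount D D (a⁻¹ * b) + shiftCount Dᶜ Dᶜ (a⁻¹ * b) := by
  rw [sameSide, shiftCount_union_right _ (disjoint_product.mpr (.inl disjoint_compl_right)),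
    shiftCount_diag_product, shiftCount_diag_product]

end ShiftCount

section DifferenceSet

variable {G : Type*} [CommGroup G] [Fintype G] [DecidableEq G]

lemma IsPropDS3.of_shiftCount {v k lam : ℕ} {E : Finset (G × G)} (hv : Fintype.card G = v)
    (hk : #E = k) (h : ∀ t : G × G, t ≠ 1 → shiftCount E E t = lam) :
    IsPropDS3 G v k lam E := by
  refine ⟨hv, hk, fun g hg => ⟨?_, ?_, ?_⟩⟩
  · rw [← h (g, g) (by simp [hg]), ← card_filter_snd_eq_mul]
    congr 1
    refine filter_congr fun ⟨⟨a, b⟩, c, d⟩ _ => ?_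
    rw [Prod.mk_mul_mk, Prod.mk.injEq, inv_mul_eq_iff_eq_mul, inv_mul_eq_iff_eq_mul]
  · rw [← h (g⁻¹, 1) (by simp [hg]), ← card_filter_snd_eq_mul]
    congr 1
    refine filter_congr fun ⟨⟨a, b⟩, c, d⟩ _ => ?_
    rw [Prod.mk_mul_mk, Prod.mk.injEq, mul_one, eq_mul_inv_iff_mul_eq, mul_inv_eq_iff_eq_mul,
      mul_comm, eq_comm (a := c * g), eq_comm (a := d)]
  · rw [← h (1, g⁻¹) (by simp [hg]), ← card_filter_snd_eq_mul]
    congr 1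
    refine filter_congr fun ⟨⟨a, b⟩, c, d⟩ _ => ?_
    rw [Prod.mk_mul_mk, Prod.mk.injEq, mul_one, eq_mul_inv_iff_mul_eq, mul_inv_eq_iff_eq_mul,
      mul_comm g, eq_comm (a := c), eq_comm (a := d * g)]

lemma IsDiffSet.shiftCount_eq {v k lam : ℕ} {D : Finset G} (hD : IsDiffSet G v k lam D)
    {g : G} (hg : g ≠ 1) : shiftCount D D g = lam := by
  rw [← hD.2.2 g⁻¹ (inv_ne_one.mpr hg), ← card_filter_snd_eq_mul]
  congr 1
  refine filter_congr fun ⟨a, c⟩ _ => ?_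
  rw [mul_inv_eq_iff_eq_mul, eq_inv_mul_iff_mul_eq, mul_comm, eq_comm]

variable {n : ℕ} {D : Finset G}

lemma IsDiffSet.hadamard_cast (hD : IsDiffSet G (4 * n ^ 2) (2 * n ^ 2 - n) (n ^ 2 - n) D) :
    (Fintype.card G : ℤ) = 4 * n ^ 2 ∧ (#D : ℤ) = 2 * n ^ 2 - n ∧
      ∀ g : G, g ≠ 1 → (shiftCount D D g : ℤ) = n ^ 2 - n := by
  have hn : n ≤ n ^ 2 := Nat.le_self_pow two_ne_zero n
  refine ⟨by rw [hD.1]; push_cast; ring, ?_, fun g hg => ?_⟩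
  · rw [hD.2.1, Nat.cast_sub (by omega)]
    push_cast
    ring
  · rw [hD.shiftCount_eq hg, Nat.cast_sub hn]
    push_cast
    ring

lemma IsDiffSet.one_le_sq_of_hadamard (hD : IsDiffSet G (4 * n ^ 2) (2 * n ^ 2 - n) (n ^ 2 - n) D) :
    1 ≤ n ^ 2 := by
  have := hD.1 ▸ Fintype.card_pos (α := G)
  omega

lemma IsDiffSet.shiftCount_sameSide_hadamard
    (hD : IsDiffSet G (4 * n ^ 2) (2 * n ^ 2 - n) (n ^ 2 - n) D) {t : G × G} (ht : t ≠ 1) :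
    shiftCount (sameSide D) (sameSide D) t = 2 * n ^ 2 * (2 * n ^ 2 + 1) := by
  obtain ⟨hv, hk, hlam⟩ := hD.hadamard_cast
  obtain ⟨a, b⟩ := t
  obtain ⟨ha₁, ha₂, ha₃⟩ := shiftCount_compl_cast D a
  obtain ⟨hb₁, hb₂, hb₃⟩ := shiftCount_compl_cast D b
  zify
  rw [shiftCount_sameSide]
  push_cast
  rw [ha₁, ha₂, ha₃, hb₁, hb₂, hb₃, hv, hk]
  rcases not_and_or.mp (Prod.mk_eq_one.not.mp ht) with ha | hb
  · rw [hlam a ha]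
    ring
  · rw [hlam b hb]
    ring

lemma IsDiffSet.shiftCount_oppSide_hadamard
    (hD : IsDiffSet G (4 * n ^ 2) (2 * n ^ 2 - n) (n ^ 2 - n) D) {t : G × G} (ht : t ≠ 1) :
    shiftCount (oppSide D) (oppSide D) t = 2 * n ^ 2 * (2 * n ^ 2 - 1) := by
  obtain ⟨hv, hk, hlam⟩ := hD.hadamard_cast
  have hn := hD.one_le_sq_of_hadamard
  obtain ⟨a, b⟩ := t
  obtain ⟨ha₁, ha₂, ha₃⟩ := shiftCount_compl_cast D a
  obtain ⟨hb₁, hb₂, hb₃⟩ := shiftCount_compl_cast D b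
  zify [show 1 ≤ 2 * n ^ 2 by omega]
  rw [shiftCount_oppSide]
  push_cast
  rw [ha₁, ha₂, ha₃, hb₁, hb₂, hb₃, hv, hk]
  rcases not_and_or.mp (Prod.mk_eq_one.not.mp ht) with ha | hb
  · rw [hlam a ha]
    ring
  · rw [hlam b hb]
    ring

lemma IsDiffSet.shiftCount_add_shiftCount_compl_hadamard
    (hD : IsDiffSet G (4 * n ^ 2) (2 * n ^ 2 - n) (n ^ 2 - n) D) {g : G} (hg : g ≠ 1) :
    shiftCount D D g + shiftCount Dᶜ Dᶜ g = 2 * n ^ 2 := by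
  obtain ⟨hv, hk, hlam⟩ := hD.hadamard_cast
  zify
  rw [(shiftCount_compl_cast D g).2.2, hv, hk, hlam g hg]
  ring

lemma IsDiffSet.shiftCount_sameSide_sdiff_diag_hadamard
    (hD : IsDiffSet G (4 * n ^ 2) (2 * n ^ 2 - n) (n ^ 2 - n) D) {t : G × G} (ht : t ≠ 1) :
    shiftCount (sameSide D \ univ.diag) (sameSide D \ univ.diag) t
      = 2 * n ^ 2 * (2 * n ^ 2 - 1) := by
  have key := shiftCount_sdiff_sdiff (diag_subset_sameSide D) t
  rw [shiftCount_symm (sameSide D), hD.shiftCount_sameSide_hadamard ht] at key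
  obtain ⟨a, b⟩ := t
  rw [Prod.inv_mk, shiftCount_diag_sameSide, shiftCount_diag_sameSide, shiftCount_diag_diag,
    inv_inv] at key
  have hn := hD.one_le_sq_of_hadamard
  by_cases hab : a = b
  · subst hab
    rw [inv_mul_cancel, mul_inv_cancel, shiftCount_one, shiftCount_one, inter_self, inter_self,
      card_add_card_compl, if_pos rfl, hD.1] at key
    zify [show 1 ≤ 2 * n ^ 2 by omega] at key ⊢
    linear_combination key
  · rw [hD.shiftCount_add_shiftCount_compl_hadamard (by simpa [inv_mul_eq_one] using hab),
      hD.shiftCount_add_shiftCount_compl_hadamard (by simpa [mul_inv_eq_one] using hab),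
      if_neg hab] at key
    zify [show 1 ≤ 2 * n ^ 2 by omega] at key ⊢
    linear_combination key

lemma IsDiffSet.isPropDS3_sameSide
    (hD : IsDiffSet G (4 * n ^ 2) (2 * n ^ 2 - n) (n ^ 2 - n) D) :
    IsPropDS3 G (4 * n ^ 2) (2 * n ^ 2 * (4 * n ^ 2 + 1)) (2 * n ^ 2 * (2 * n ^ 2 + 1))
      (sameSide D) := by
  refine .of_shiftCount hD.1 ?_ fun t ht => hD.shiftCount_sameSide_hadamard ht
  obtain ⟨hv, hk, -⟩ := hD.hadamard_cast
  zify [card_le_univ D]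
  rw [card_sameSide]
  push_cast [card_le_univ D]
  rw [hv, hk]
  ring

lemma IsDiffSet.isPropDS3_oppSide
    (hD : IsDiffSet G (4 * n ^ 2) (2 * n ^ 2 - n) (n ^ 2 - n) D) :
    IsPropDS3 G (4 * n ^ 2) (2 * n ^ 2 * (4 * n ^ 2 - 1)) (2 * n ^ 2 * (2 * n ^ 2 - 1))
      (oppSide D) := by
  refine .of_shiftCount hD.1 ?_ fun t ht => hD.shiftCount_oppSide_hadamard ht
  obtain ⟨hv, hk, -⟩ := hD.hadamard_cast
  have hn := hD.one_le_sq_of_hadamard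
  zify [show 1 ≤ 4 * n ^ 2 by omega]
  rw [card_oppSide]
  push_cast [card_le_univ D]
  rw [hv, hk]
  ring

lemma IsDiffSet.isPropDS3_sameSide_sdiff_diag
    (hD : IsDiffSet G (4 * n ^ 2) (2 * n ^ 2 - n) (n ^ 2 - n) D) :
    IsPropDS3 G (4 * n ^ 2) (2 * n ^ 2 * (4 * n ^ 2 - 1)) (2 * n ^ 2 * (2 * n ^ 2 - 1))
      (sameSide D \ univ.diag) := by
  refine .of_shiftCount hD.1 ?_ fun t ht => hD.shiftCount_sameSide_sdiff_diag_hadamard ht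
  have hE := hD.isPropDS3_sameSide.2.1
  have hn := hD.one_le_sq_of_hadamard
  rw [card_sdiff_of_subset (diag_subset_sameSide D), diag_card, card_univ, hD.1, hE]
  zify [show 1 ≤ 4 * n ^ 2 by omega, show 4 * n ^ 2 ≤ 2 * n ^ 2 * (4 * n ^ 2 + 1) by nlinarith]
  ring

end DifferenceSet

theorem stmt14_general {G : Type*} [CommGroup G] [Fintype G] [DecidableEq G]
    (n : ℕ) (D : Finset G)
    (hD : IsDiffSet G (4 * n ^ 2) (2 * n ^ 2 - n) (n ^ 2 - n) D) :
    IsPropDS3 G (4 * n ^ 2) (2 * n ^ 2 * (4 * n ^ 2 + 1)) (2 * n ^ 2 * (2 * n ^ 2 + 1))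
      ((D ×ˢ D) ∪ (Dᶜ ×ˢ Dᶜ)) ∧
    IsPropDS3 G (4 * n ^ 2) (2 * n ^ 2 * (4 * n ^ 2 - 1)) (2 * n ^ 2 * (2 * n ^ 2 - 1))
      (((D ×ˢ D).filter fun p => p.1 ≠ p.2) ∪ ((Dᶜ ×ˢ Dᶜ).filter fun p => p.1 ≠ p.2)) ∧
    IsPropDS3 G (4 * n ^ 2) (2 * n ^ 2 * (4 * n ^ 2 - 1)) (2 * n ^ 2 * (2 * n ^ 2 - 1))
      ((D ×ˢ Dᶜ) ∪ (Dᶜ ×ˢ D)) :=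
  ⟨hD.isPropDS3_sameSide, sameSide_sdiff_diag D ▸ hD.isPropDS3_sameSide_sdiff_diag,
    hD.isPropDS3_oppSide⟩

theorem stmt14 {G : Type*} [CommGroup G] [Fintype G] [DecidableEq G]
    (n : ℕ) (hn : 0 < n) (D : Finset G)
    (hD : IsDiffSet G (4 * n ^ 2) (2 * n ^ 2 - n) (n ^ 2 - n) D) :
    IsPropDS3 G (4 * n ^ 2) (2 * n ^ 2 * (4 * n ^ 2 + 1)) (2 * n ^ 2 * (2 * n ^ 2 + 1))
      ((D ×ˢ D) ∪ (Dᶜ ×ˢ Dᶜ)) ∧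
    IsPropDS3 G (4 * n ^ 2) (2 * n ^ 2 * (4 * n ^ 2 - 1)) (2 * n ^ 2 * (2 * n ^ 2 - 1))
      (((D ×ˢ D).filter fun p => p.1 ≠ p.2) ∪ ((Dᶜ ×ˢ Dᶜ).filter fun p => p.1 ≠ p.2)) ∧
    IsPropDS3 G (4 * n ^ 2) (2 * n ^ 2 * (4 * n ^ 2 - 1)) (2 * n ^ 2 * (2 * n ^ 2 - 1))
      ((D ×ˢ Dᶜ) ∪ (Dᶜ ×ˢ D)) :=
  stmt14_general n D hD
end
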